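/- Let I be an ideal of Borel type in K[x_1,...,x_n]. Suppose c_i ≥ Md_i(I) for some i ≤ j. Then either x_1^{c_1}···x_i^{c_i} ∈ I, or x_1^{c_1}···x_{i−1}^{c_{i−1}}·K[x_i,...,x_n] ∩ I = {0}. -/

import Mathlib

open MvPolynomial

section Preamble

variable {K : Type} [Field K] {n : ℕ}

/-- The Hilbert function of `S/I`: the `K`-dimension of the degree-`d` component of `S/I`,
realized as `S_d / (I ∩ S_d)`. -/
noncomputable def hilbFn (I : Ideal (MvPolynomial (Fin n) K)) (d : ℕ) : ℕ :=
  Module.finrank K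
    (↥(homogeneousSubmodule (Fin n) K d) ⧸
      ((Submodule.restrictScalars K I ⊓ homogeneousSubmodule (Fin n) K d).comap
        (homogeneousSubmodule (Fin n) K d).subtype))

open Filter in
/-- The Hilbert polynomial of `S/I`: the polynomial eventually agreeing with the Hilbert
function (or `0` if none exists). -/
noncomputable def hilbPoly (I : Ideal (MvPolynomial (Fin n) K)) : Polynomial ℚ :=
  letI := Classical.propDecidable
  if h : ∃ p : Polynomial ℚ, ∀ᶠ d : ℕ in atTop, p.eval (d : ℚ) = hilbFn I d then h.choose
  else 0

/-- The multiplicity `e(S/I)`: the normalized leading coefficient of the Hilbert polynomial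
of `S/I`; in the zero-dimensional case (zero Hilbert polynomial) it is the total length,
i.e. the sum of the values of the Hilbert function. -/
noncomputable def multQ (I : Ideal (MvPolynomial (Fin n) K)) : ℚ :=
  if hilbPoly I = 0 then ∑' d : ℕ, (hilbFn I d : ℚ)
  else (Nat.factorial (hilbPoly I).natDegree) * (hilbPoly I).leadingCoeff

/-- The length-multiplicity `mult_I(P)`: the length (sup of lengths of chains of submodules)
of the largest finite-length submodule of `(S/I)_P`. -/
noncomputable def lmult (I P : Ideal (MvPolynomial (Fin n) K)) : ℕ :=
  letI := Classical.propDecidable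
  if hp : P.IsPrime then
    letI := hp
    sSup {k : ℕ | ∃ c : Fin (k + 1) →
      Submodule (Localization P.primeCompl)
        ↥(sSup {N : Submodule (Localization P.primeCompl)
            (LocalizedModule P.primeCompl (MvPolynomial (Fin n) K ⧸ I)) |
          IsFiniteLength (Localization P.primeCompl) ↥N}),
      StrictMono c}
  else 0

/-- The `r`-th arithmetic degree of `I`. -/
noncomputable def arithDegR (I : Ideal (MvPolynomial (Fin n) K)) (r : ℕ) : ℚ :=
  ∑ᶠ P ∈ {P ∈ associatedPrimes (MvPolynomial (Fin n) K) (MvPolynomial (Fin n) K ⧸ I) |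
      ringKrullDim (MvPolynomial (Fin n) K ⧸ P) = (r : WithBot ℕ∞)},
    (lmult I P : ℚ) * multQ P

/-- The arithmetic degree of `I`. -/
noncomputable def arithDeg (I : Ideal (MvPolynomial (Fin n) K)) : ℚ :=
  ∑ᶠ P ∈ associatedPrimes (MvPolynomial (Fin n) K) (MvPolynomial (Fin n) K ⧸ I),
    (lmult I P : ℚ) * multQ P

/-- The `r`-th geometric degree of `I`. -/
noncomputable def geomDegR (I : Ideal (MvPolynomial (Fin n) K)) (r : ℕ) : ℚ :=
  ∑ᶠ P ∈ {P ∈ I.minimalPrimes |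
      ringKrullDim (MvPolynomial (Fin n) K ⧸ P) = (r : WithBot ℕ∞)},
    (lmult I P : ℚ) * multQ P

/-- The geometric degree of `I`. -/
noncomputable def geomDeg (I : Ideal (MvPolynomial (Fin n) K)) : ℚ :=
  ∑ᶠ P ∈ I.minimalPrimes, (lmult I P : ℚ) * multQ P

/-- `I` is generated by forms of degree at most `d`. -/
def GeneratedInDegLE (I : Ideal (MvPolynomial (Fin n) K)) (d : ℕ) : Prop :=
  ∃ G : Set (MvPolynomial (Fin n) K), I = Ideal.span G ∧
    ∀ g ∈ G, ∃ k ≤ d, g.IsHomogeneous k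

/-- `I` is a homogeneous ideal (generated by homogeneous elements). -/
def IsHomogeneousIdeal (I : Ideal (MvPolynomial (Fin n) K)) : Prop :=
  ∃ G : Set (MvPolynomial (Fin n) K), I = Ideal.span G ∧ ∀ g ∈ G, ∃ k, g.IsHomogeneous k

/-- The Castelnuovo–Mumford regularity of a homogeneous ideal `I ⊆ S`, defined as the least
`m` such that `I` admits a finite graded free resolution whose `i`-th free module is generated
in degrees at most `m + i`.  The resolution is encoded by ranks `rk i`, generator degrees
`dg i`, an augmentation `g : F_0 → I` and matrices `d i : F_{i+1} → F_i` of homogeneous forms,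
exact everywhere. -/
noncomputable def idealReg (I : Ideal (MvPolynomial (Fin n) K)) : ℕ :=
  sInf { m : ℕ |
    ∃ (rk : ℕ → ℕ) (dg : (i : ℕ) → Fin (rk i) → ℕ)
      (g : Fin (rk 0) → MvPolynomial (Fin n) K)
      (d : (i : ℕ) → Matrix (Fin (rk i)) (Fin (rk (i + 1))) (MvPolynomial (Fin n) K)),
      (∀ s, (g s).IsHomogeneous (dg 0 s)) ∧
      Ideal.span (Set.range g) = I ∧
      (∀ i s t, d i s t = 0 ∨ ∃ k, k + dg i s = dg (i + 1) t ∧ (d i s t).IsHomogeneous k) ∧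
      (∀ i, LinearMap.range (d (i + 1)).mulVecLin = LinearMap.ker (d i).mulVecLin) ∧
      LinearMap.range (d 0).mulVecLin =
        LinearMap.ker (Matrix.of fun (_ : Fin 1) s => g s).mulVecLin ∧
      (∃ N, ∀ i, N ≤ i → rk i = 0) ∧
      (∀ i s, dg i s ≤ m + i) }

/-- `I` is a monomial ideal. -/
def IsMonomialIdeal (I : Ideal (MvPolynomial (Fin n) K)) : Prop :=
  ∃ A : Set (Fin n →₀ ℕ), I = Ideal.span ((fun a => (monomial a (1 : K))) '' A)

/-- `I` is of Borel type: for every monomial `x^a ∈ I`, every `i`, and every `j ≤ i`,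
some `x_j^t · x^a / x_i^{a_i}` lies in `I`. -/
def IsBorelType (I : Ideal (MvPolynomial (Fin n) K)) : Prop :=
  IsMonomialIdeal I ∧
    ∀ a : Fin n →₀ ℕ, monomial a (1 : K) ∈ I → ∀ i j : Fin n, j ≤ i →
      ∃ t : ℕ, monomial (Finsupp.single j t + a.erase i) (1 : K) ∈ I

/-- `I` is strongly stable: for every monomial `x^a ∈ I` with `x_i ∣ x^a` and `j ≤ i`,
also `x_j · x^a / x_i ∈ I`. -/
def IsStronglyStable (I : Ideal (MvPolynomial (Fin n) K)) : Prop :=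
  IsMonomialIdeal I ∧
    ∀ a : Fin n →₀ ℕ, monomial a (1 : K) ∈ I → ∀ i j : Fin n, j ≤ i → a i ≠ 0 →
      monomial (a - Finsupp.single i 1 + Finsupp.single j 1) (1 : K) ∈ I

/-- The pair `(x^a, Z)` is admissible for `I`: `Z ∩ supp(x^a) = ∅` and
`x^a·K[Z] ∩ I = {0}`. -/
def IsAdmissiblePair (I : Ideal (MvPolynomial (Fin n) K)) (a : Fin n →₀ ℕ)
    (Z : Finset (Fin n)) : Prop :=
  (∀ i ∈ a.support, i ∉ Z) ∧
    ∀ b : Fin n →₀ ℕ, (∀ i ∈ b.support, i ∈ Z) → monomial (a + b) (1 : K) ∉ I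

/-- `x^a·K[Z] ⊆ x^{a'}·K[Z']` as sets of monomials. -/
def ConeLE {n : ℕ} (a : Fin n →₀ ℕ) (Z : Finset (Fin n)) (a' : Fin n →₀ ℕ)
    (Z' : Finset (Fin n)) : Prop :=
  ∀ b : Fin n →₀ ℕ, (∀ i ∈ b.support, i ∈ Z) →
    ∃ b' : Fin n →₀ ℕ, (∀ i ∈ b'.support, i ∈ Z') ∧ a + b = a' + b'

/-- `(x^a, Z)` is a standard pair of the monomial ideal `I`. -/
def IsStandardPair (I : Ideal (MvPolynomial (Fin n) K)) (a : Fin n →₀ ℕ)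
    (Z : Finset (Fin n)) : Prop :=
  IsAdmissiblePair I a Z ∧
    ∀ a' Z', IsAdmissiblePair I a' Z' → (a, Z) ≠ (a', Z') → ¬ ConeLE a Z a' Z'

/-- `std_r(I)`: the number of standard pairs `(·, Z)` of `I` with `|Z| = r`. -/
noncomputable def stdR (I : Ideal (MvPolynomial (Fin n) K)) (r : ℕ) : ℕ :=
  Nat.card {p : (Fin n →₀ ℕ) × Finset (Fin n) // IsStandardPair I p.1 p.2 ∧ p.2.card = r}

/-- The exponents of the minimal monomial generators of a monomial ideal. -/
def minMonomialGens (I : Ideal (MvPolynomial (Fin n) K)) : Set (Fin n →₀ ℕ) :=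
  {a | monomial a (1 : K) ∈ I ∧
    ∀ i ∈ a.support, monomial (a - Finsupp.single i 1) (1 : K) ∉ I}

/-- `Md_i(I)`: the largest power of `x_i` appearing in a minimal monomial generator of `I`. -/
noncomputable def Md (I : Ideal (MvPolynomial (Fin n) K)) (i : Fin n) : ℕ :=
  sSup ((fun a => a i) '' minMonomialGens I)

/-- The generating degree of an ideal: the least `D` such that the ideal is generated in
degrees at most `D`. -/
noncomputable def genDeg {σ : Type} (J : Ideal (MvPolynomial σ K)) : ℕ :=
  sInf {D : ℕ | ∃ G : Set (MvPolynomial σ K), J = Ideal.span G ∧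
    ∀ g ∈ G, g.totalDegree ≤ D}

/-- The depth of a (local) ring: the longest regular sequence of nonunits. -/
noncomputable def ringDepth (R : Type) [CommRing R] : ℕ :=
  sSup {k : ℕ | ∃ rs : List R, rs.length = k ∧ (∀ a ∈ rs, a ∈ nonunits R) ∧
    RingTheory.Sequence.IsRegular R rs}

/-- A (local) ring is Cohen–Macaulay if its depth equals its Krull dimension. -/
def IsCMLocal (R : Type) [CommRing R] : Prop :=
  (ringDepth R : WithBot ℕ∞) = ringKrullDim R

/-- The height `ht(P/J)`: the sup of lengths of chains of primes between `J` and `P`. -/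
noncomputable def heightOver (J P : Ideal (MvPolynomial (Fin n) K)) : ℕ :=
  sSup {k : ℕ | ∃ c : Fin (k + 1) → Ideal (MvPolynomial (Fin n) K),
    (∀ i, (c i).IsPrime ∧ J ≤ c i) ∧ StrictMono c ∧ c (Fin.last k) = P}

end Preamble

section AuxStmt11

variable {K : Type} [Field K] {n : ℕ}

lemma monomial_mem_of_le' {I : Ideal (MvPolynomial (Fin n) K)} {u v : Fin n →₀ ℕ}
    (h : u ≤ v) (hu : monomial u (1 : K) ∈ I) : monomial v (1 : K) ∈ I := by
  have hvu : monomial v (1 : K) = monomial (v - u) (1 : K) * monomial u (1 : K) := by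
    rw [monomial_mul, one_mul, tsub_add_cancel_of_le h]
  rw [hvu]
  exact I.mul_mem_left _ hu

lemma exists_minGen_le' {I : Ideal (MvPolynomial (Fin n) K)} {v : Fin n →₀ ℕ}
    (hv : monomial v (1 : K) ∈ I) : ∃ u ∈ minMonomialGens I, u ≤ v := by
  classical
  set S : Set (Fin n →₀ ℕ) := {w | w ≤ v ∧ monomial w (1 : K) ∈ I} with hS
  have hfin : S.Finite := (Set.finite_Iic v).subset fun w hw => hw.1
  obtain ⟨m, hmS, hmin⟩ : ∃ m ∈ S, ∀ a' ∈ S, a' ≤ m → m = a' := by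
    obtain ⟨m, hm⟩ := hfin.exists_minimal ⟨v, le_rfl, hv⟩
    exact ⟨m, hm.prop, fun a' ha' h => le_antisymm (hm.2 ha' h) h⟩
  refine ⟨m, ⟨hmS.2, ?_⟩, hmS.1⟩
  intro k hk hmem
  have hk' : m k ≠ 0 := Finsupp.mem_support_iff.mp hk
  have hle : m - Finsupp.single k 1 ≤ m := tsub_le_self
  have heq : m = m - Finsupp.single k 1 :=
    hmin (m - Finsupp.single k 1) ⟨hle.trans hmS.1, hmem⟩ hle
  have hcf := DFunLike.congr_fun heq k
  rw [Finsupp.tsub_apply, Finsupp.single_eq_same] at hcf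
  omega

lemma minGens_antichain (I : Ideal (MvPolynomial (Fin n) K)) :
    IsAntichain (· ≤ ·) (minMonomialGens I) := by
  intro u hu w hw hne hle
  obtain ⟨k, hk⟩ : ∃ k, u k < w k := by
    by_contra h
    push_neg at h
    exact hne (le_antisymm hle (Finsupp.le_def.mpr h))
  have hk' : k ∈ w.support := Finsupp.mem_support_iff.mpr (by omega)
  have huw : u ≤ w - Finsupp.single k 1 := by
    rw [Finsupp.le_def]
    intro l
    rw [Finsupp.tsub_apply, Finsupp.single_apply]
    have := Finsupp.le_def.mp hle l
    split_ifs with h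
    · subst h; omega
    · omega
  exact hw.2 k hk' (monomial_mem_of_le' huw hu.1)

lemma minGens_finite (I : Ideal (MvPolynomial (Fin n) K)) :
    (minMonomialGens I).Finite :=
  (minGens_antichain I).finite_of_partiallyWellOrderedOn (Set.isPWO_of_wellQuasiOrderedLE _)

lemma apply_le_Md' {I : Ideal (MvPolynomial (Fin n) K)} {u : Fin n →₀ ℕ} (i : Fin n)
    (hu : u ∈ minMonomialGens I) : u i ≤ Md I i :=
  le_csSup (((minGens_finite I).image _).bddAbove) (Set.mem_image_of_mem _ hu)

lemma borel_key {I : Ideal (MvPolynomial (Fin n) K)} (hI : IsBorelType I) (i : Fin n)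
    (a : Fin n →₀ ℕ) (ha : ∀ k, a k ≠ 0 → k < i) :
    ∀ N (b : Fin n →₀ ℕ), (b.support.erase i).card ≤ N → (∀ k ∈ b.support, i ≤ k) →
      monomial (a + b) (1 : K) ∈ I →
      ∃ s, monomial (a + Finsupp.single i s) (1 : K) ∈ I := by
  classical
  have base : ∀ b : Fin n →₀ ℕ, b.support.erase i = ∅ →
      monomial (a + b) (1 : K) ∈ I →
      ∃ s, monomial (a + Finsupp.single i s) (1 : K) ∈ I := by
    intro b hemp hmem
    refine ⟨b i, ?_⟩
    have hb : b = Finsupp.single i (b i) := by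
      ext k
      rcases eq_or_ne k i with rfl | hki
      · rw [Finsupp.single_eq_same]
      · rw [Finsupp.single_eq_of_ne' (Ne.symm hki)]
        by_contra hbk
        exact Finset.notMem_empty k
          (hemp ▸ Finset.mem_erase.mpr ⟨hki, Finsupp.mem_support_iff.mpr hbk⟩)
    rwa [← hb]
  intro N
  induction N with
  | zero =>
    intro b hcard hsupp hmem
    exact base b (Finset.card_eq_zero.mp (Nat.le_zero.mp hcard)) hmem
  | succ N ih =>
    intro b hcard hsupp hmem
    by_cases hemp : b.support.erase i = ∅
    · exact base b hemp hmem
    obtain ⟨m, hm⟩ := Finset.nonempty_iff_ne_empty.mpr hemp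
    rw [Finset.mem_erase] at hm
    have him : i < m := lt_of_le_of_ne (hsupp m hm.2) (Ne.symm hm.1)
    obtain ⟨t, ht⟩ := hI.2 (a + b) hmem m i him.le
    have ham : a m = 0 := by
      by_contra h
      exact absurd (ha m h) (not_lt.mpr him.le)
    have herase : (a + b).erase m = a + b.erase m := by
      ext k
      rcases eq_or_ne k m with rfl | hkm
      · simp [Finsupp.erase_same, ham]
      · rw [Finsupp.erase_ne hkm, Finsupp.add_apply, Finsupp.add_apply,
          Finsupp.erase_ne hkm]
    rw [herase] at ht
    have hcomm : Finsupp.single i t + (a + b.erase m) =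
        a + (Finsupp.single i t + b.erase m) := by
      rw [← add_assoc, add_comm (Finsupp.single i t) a, add_assoc]
    rw [hcomm] at ht
    set b' : Fin n →₀ ℕ := Finsupp.single i t + b.erase m with hb'
    have hsub : b'.support.erase i ⊆ (b.support.erase i).erase m := by
      intro k hk
      rw [Finset.mem_erase] at hk
      have hki : k ≠ i := hk.1
      have hbk : b' k ≠ 0 := Finsupp.mem_support_iff.mp hk.2
      rw [hb', Finsupp.add_apply, Finsupp.single_eq_of_ne' (Ne.symm hki), zero_add] at hbk
      have hkm : k ≠ m := by
        intro h; subst h; rw [Finsupp.erase_same] at hbk; exact hbk rfl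
      rw [Finsupp.erase_ne hkm] at hbk
      exact Finset.mem_erase.mpr ⟨hkm, Finset.mem_erase.mpr ⟨hki, Finsupp.mem_support_iff.mpr hbk⟩⟩
    have hm' : m ∈ b.support.erase i := Finset.mem_erase.mpr hm
    have hcard' : (b'.support.erase i).card ≤ N := by
      have h1 := Finset.card_le_card hsub
      have h2 := Finset.card_erase_of_mem hm'
      have h3 : 1 ≤ (b.support.erase i).card := Finset.card_pos.mpr ⟨m, hm'⟩
      omega
    have hsupp' : ∀ k ∈ b'.support, i ≤ k := by
      intro k hk
      rcases eq_or_ne k i with rfl | hki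
      · exact le_rfl
      have hbk : b' k ≠ 0 := Finsupp.mem_support_iff.mp hk
      rw [hb', Finsupp.add_apply, Finsupp.single_eq_of_ne' (Ne.symm hki), zero_add] at hbk
      have hkm : k ≠ m := by
        intro h; subst h; rw [Finsupp.erase_same] at hbk; exact hbk rfl
      rw [Finsupp.erase_ne hkm] at hbk
      exact hsupp k (Finsupp.mem_support_iff.mpr hbk)
    exact ih b' hcard' hsupp' ht

end AuxStmt11

/-- for an ideal `I` of Borel type, if `c_i ≥ Md_i(I)` for some `i ≤ j`, then
either `x_1^{c_1} ⋯ x_i^{c_i} ∈ I`, or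
`x_1^{c_1} ⋯ x_{i−1}^{c_{i−1}} · K[x_i, …, x_n] ∩ I = {0}`. -/
theorem stmt11 {K : Type} [Field K] {n : ℕ} (I : Ideal (MvPolynomial (Fin n) K))
    (hI : IsBorelType I) (c : Fin n →₀ ℕ) (i j : Fin n) (hij : i ≤ j)
    (hc : Md I i ≤ c i) :
    monomial (c.filter fun k : Fin n => k ≤ i) (1 : K) ∈ I ∨
      ∀ b : Fin n →₀ ℕ, (∀ k ∈ b.support, i ≤ k) →
        monomial ((c.filter fun k : Fin n => k < i) + b) (1 : K) ∉ I := by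
  classical
  by_cases H : ∀ b : Fin n →₀ ℕ, (∀ k ∈ b.support, i ≤ k) →
      monomial ((c.filter fun k : Fin n => k < i) + b) (1 : K) ∉ I
  · exact Or.inr H
  left
  push_neg at H
  obtain ⟨b, hb, hmem⟩ := H
  set a : Fin n →₀ ℕ := c.filter fun k : Fin n => k < i with ha
  have hasupp : ∀ k, a k ≠ 0 → k < i := by
    intro k hk
    rw [ha, Finsupp.filter_apply] at hk
    by_contra h
    simp [h] at hk
  obtain ⟨s, hs⟩ := borel_key hI i a hasupp _ b le_rfl hb hmem
  obtain ⟨u, huG, hule⟩ := exists_minGen_le' hs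
  have hui : u i ≤ c i := le_trans (apply_le_Md' i huG) hc
  have htarget : u ≤ c.filter fun k : Fin n => k ≤ i := by
    rw [Finsupp.le_def]
    intro k
    have hk := Finsupp.le_def.mp hule k
    rw [Finsupp.add_apply, ha, Finsupp.filter_apply, Finsupp.single_apply] at hk
    rw [Finsupp.filter_apply]
    rcases lt_trichotomy k i with h | h | h
    · simp only [h, if_true] at hk
      simp only [le_of_lt h, if_true]
      have : ¬ i = k := by intro e; exact absurd (e ▸ h) (lt_irrefl k)
      simp only [this, if_false] at hk
      omega
    · subst h
      simp only [le_refl, if_true]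
      exact hui
    · have h1 : ¬ k < i := not_lt.mpr h.le
      have h2 : ¬ k ≤ i := not_le.mpr h
      have h3 : ¬ i = k := by intro e; exact absurd (e ▸ h) (lt_irrefl k)
      simp only [h1, if_false, h3, if_false, zero_add] at hk
      simp only [h2, if_false]
      omega
  exact monomial_mem_of_le' htarget huG.1
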